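/- arXiv:2011.07790 — 4 statements merged into one kernel-verified Lean document; each statement's English description precedes it below -/
import Mathlib

section
/- Let k ≥ 2 be an integer, 0 < p < ∞, and let f be analytic on the open unit disc D. Then for every 0 < r < 1, (1/2π)∫₀^{2π} |W_k f(r e^{iθ})|^p dθ ≤ max(k^{1−p}, 1) · (1/2π)∫₀^{2π} |f(r e^{iθ})|^p dθ. Consequently ‖W_k f‖_{H^p} ≤ max(k^{1/p−1}, 1) ‖f‖_{H^p}. -/
open MeasureTheory
open scoped ENNReal

/-- Mean of `|f|^p` over the circle of radius `r` (normalized Lebesgue measure). -/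
noncomputable def hpInt (p : ℝ) (f : ℂ → ℂ) (r : ℝ) : ℝ≥0∞ :=
  (∫⁻ θ in Set.Ioc (0 : ℝ) (2 * Real.pi),
      ENNReal.ofReal (‖f ((r : ℂ) * Complex.exp ((θ : ℂ) * Complex.I))‖ ^ p)) /
    ENNReal.ofReal (2 * Real.pi)

/-- The Hardy space `H^p` norm of `f` on the unit disc. -/
noncomputable def hpNorm (p : ℝ) (f : ℂ → ℂ) : ℝ≥0∞ :=
  ⨆ r ∈ Set.Ioo (0 : ℝ) 1, hpInt p f r ^ (1 / p)

/-- The F. Wiener transform `W_k f(z) = (1/k) ∑_{j<k} f(ω_k^j z)`, `ω_k = exp(2πi/k)`. -/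
noncomputable def wiener (k : ℕ) (f : ℂ → ℂ) (z : ℂ) : ℂ :=
  (k : ℂ)⁻¹ * ∑ j ∈ Finset.range k,
    f (Complex.exp (2 * (Real.pi : ℂ) * Complex.I * (j : ℂ) / (k : ℂ)) * z)

/-- `Φ_k(p,t)`: the extremal quantity `sup { Re (f^{(k)}(0)/k!) }` over analytic `f` on the
unit disc with `‖f‖_{H^p} ≤ 1` and `f(0) = t`. -/
noncomputable def Phi (k : ℕ) (p t : ℝ) : ℝ :=
  sSup { x : ℝ | ∃ f : ℂ → ℂ, DifferentiableOn ℂ f (Metric.ball 0 1) ∧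
    hpNorm p f ≤ 1 ∧ f 0 = (t : ℂ) ∧ x = (iteratedDeriv k f 0 / (Nat.factorial k : ℂ)).re }

/-!
On the circle of radius `r`, `W_k f (r e^{iθ})` is the average of the values of `f` at the `k`
rotated points `r e^{i(θ + 2πj/k)}`. The power-mean inequality
`((1/k) ∑ b_j)^p ≤ max(k^{1-p}, 1) (1/k) ∑ b_j^p` (Jensen for `p ≥ 1`, subadditivity of `t ↦ t^p`
for `p ≤ 1`) bounds `|W_k f|^p` pointwise, and after integration over the circle each rotated
term has the same mean as `|f|^p`, by rotation invariance of arc length. Taking `p`-th roots and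
the supremum over `r` gives the `H^p` bound, since `max(k^{1-p}, 1)^{1/p} = max(k^{1/p-1}, 1)`.
-/

open Finset Function Metric Real

namespace ENNReal

theorem rpow_sum_le_sum_rpow {ι : Type*} (s : Finset ι) (f : ι → ℝ≥0∞) {p : ℝ}
    (hp₀ : 0 < p) (hp₁ : p ≤ 1) : (∑ i ∈ s, f i) ^ p ≤ ∑ i ∈ s, f i ^ p := by
  induction s using Finset.cons_induction with
  | empty => simp [zero_rpow_of_pos hp₀]
  | cons i s _ ih =>
    rw [sum_cons, sum_cons]
    exact (rpow_add_le_add_rpow _ _ hp₀.le hp₁).trans (add_le_add le_rfl ih)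

theorem rpow_mean_le_max_mul_mean_rpow {ι : Type*} {s : Finset ι} (hs : s.Nonempty)
    (f : ι → ℝ≥0∞) {p : ℝ} (hp : 0 < p) :
    ((#s : ℝ≥0∞)⁻¹ * ∑ i ∈ s, f i) ^ p
      ≤ max ((#s : ℝ≥0∞) ^ (1 - p)) 1 * (#s : ℝ≥0∞)⁻¹ * ∑ i ∈ s, f i ^ p := by
  have hn₀ : (#s : ℝ≥0∞) ≠ 0 := by simpa using hs.ne_empty
  have hn : (#s : ℝ≥0∞) ≠ ⊤ := natCast_ne_top _
  rcases le_total 1 p with hp₁ | hp₁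
  · have hw : ∑ _i ∈ s, (#s : ℝ≥0∞)⁻¹ = 1 := by
      rw [sum_const, nsmul_eq_mul, ENNReal.mul_inv_cancel hn₀ hn]
    calc ((#s : ℝ≥0∞)⁻¹ * ∑ i ∈ s, f i) ^ p
        = (∑ i ∈ s, (#s : ℝ≥0∞)⁻¹ * f i) ^ p := by rw [mul_sum]
      _ ≤ ∑ i ∈ s, (#s : ℝ≥0∞)⁻¹ * f i ^ p := rpow_arith_mean_le_arith_mean_rpow s _ f hw hp₁
      _ = (#s : ℝ≥0∞)⁻¹ * ∑ i ∈ s, f i ^ p := by rw [mul_sum]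
      _ ≤ _ := by rw [mul_assoc]; exact le_mul_of_one_le_left' (le_max_right _ _)
  · have hinv : (#s : ℝ≥0∞)⁻¹ ^ p = (#s : ℝ≥0∞) ^ (1 - p) * (#s : ℝ≥0∞)⁻¹ := by
      rw [← rpow_neg_one, ← rpow_mul, ← rpow_add _ _ hn₀ hn]
      ring_nf
    calc ((#s : ℝ≥0∞)⁻¹ * ∑ i ∈ s, f i) ^ p
        = (#s : ℝ≥0∞)⁻¹ ^ p * (∑ i ∈ s, f i) ^ p := mul_rpow_of_nonneg _ _ hp.le
      _ ≤ (#s : ℝ≥0∞) ^ (1 - p) * (#s : ℝ≥0∞)⁻¹ * ∑ i ∈ s, f i ^ p := by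
          rw [hinv]; exact mul_le_mul_right (rpow_sum_le_sum_rpow s f hp hp₁) _
      _ ≤ _ := by gcongr; exact le_max_left _ _

theorem max_rpow_one_rpow {x : ℝ≥0∞} {a b : ℝ} (hb : 0 ≤ b) :
    max (x ^ a) 1 ^ b = max (x ^ (a * b)) 1 := by
  rw [(monotone_rpow_of_nonneg hb).map_max, rpow_mul, one_rpow]

theorem ofReal_max_rpow_one {x : ℝ} (hx : 0 < x) (a : ℝ) :
    ENNReal.ofReal (max (x ^ a) 1) = max (ENNReal.ofReal x ^ a) 1 := by
  rw [ofReal_max, ofReal_rpow_of_pos hx, ofReal_one]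

end ENNReal

theorem Function.Periodic.setLIntegral_Ioc_comp_add {H : ℝ → ℝ≥0∞} {T : ℝ}
    (hH : Periodic H T) (hT : 0 < T) (t c : ℝ) :
    ∫⁻ θ in Set.Ioc t (t + T), H (θ + c) = ∫⁻ θ in Set.Ioc t (t + T), H θ := by
  have : Fact (0 < T) := ⟨hT⟩
  have hlift : ∀ θ : ℝ, H (θ + c) = hH.lift ((θ : AddCircle T) + c) := fun θ => by
    rw [← QuotientAddGroup.mk_add, hH.lift_coe]
  simp_rw [hlift, ← hH.lift_coe]
  rw [AddCircle.lintegral_preimage T t (fun b => hH.lift (b + c)), AddCircle.lintegral_preimage]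
  exact lintegral_add_right_eq_self hH.lift _

theorem hpInt_eq_lintegral_circleMap (p : ℝ) (f : ℂ → ℂ) (r : ℝ) (hp : 0 ≤ p) :
    hpInt p f r = (∫⁻ θ in Set.Ioc 0 (2 * π), ‖f (circleMap 0 r θ)‖ₑ ^ p) /
      ENNReal.ofReal (2 * π) := by
  simp only [hpInt, circleMap_zero, ← ENNReal.ofReal_rpow_of_nonneg (norm_nonneg _) hp,
    ofReal_norm]

theorem wiener_circleMap (k : ℕ) (f : ℂ → ℂ) (r θ : ℝ) :
    wiener k f (circleMap 0 r θ) =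
      (k : ℂ)⁻¹ * ∑ j ∈ range k, f (circleMap 0 r (θ + 2 * π * j / k)) := by
  simp only [wiener, circleMap_zero]
  congr 1
  refine sum_congr rfl fun j _ => congrArg f ?_
  rw [mul_left_comm, ← Complex.exp_add]
  push_cast
  ring_nf

theorem enorm_wiener_circleMap_rpow_le {k : ℕ} (hk : k ≠ 0) {p : ℝ} (hp : 0 < p)
    (f : ℂ → ℂ) (r θ : ℝ) :
    ‖wiener k f (circleMap 0 r θ)‖ₑ ^ p ≤ max ((k : ℝ≥0∞) ^ (1 - p)) 1 * (k : ℝ≥0∞)⁻¹ *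
      ∑ j ∈ range k, ‖f (circleMap 0 r (θ + 2 * π * j / k))‖ₑ ^ p := by
  have hmean : ‖wiener k f (circleMap 0 r θ)‖ₑ
      ≤ (k : ℝ≥0∞)⁻¹ * ∑ j ∈ range k, ‖f (circleMap 0 r (θ + 2 * π * j / k))‖ₑ := by
    rw [wiener_circleMap, enorm_mul, enorm_inv (by exact_mod_cast hk), ← ofReal_norm,
      Complex.norm_natCast, ENNReal.ofReal_natCast]
    exact mul_le_mul_right (enorm_sum_le _ _) _
  have hpow := ENNReal.rpow_mean_le_max_mul_mean_rpow (s := range k) (by simpa using hk)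
    (fun j => ‖f (circleMap 0 r (θ + 2 * π * j / k))‖ₑ) hp
  rw [card_range] at hpow
  exact (ENNReal.rpow_le_rpow hmean hp.le).trans hpow

theorem lintegral_enorm_wiener_circleMap_rpow_le {k : ℕ} (hk : k ≠ 0) {p : ℝ} (hp : 0 < p)
    {f : ℂ → ℂ} {r : ℝ} (hf : ContinuousOn f (sphere 0 |r|)) :
    ∫⁻ θ in Set.Ioc 0 (2 * π), ‖wiener k f (circleMap 0 r θ)‖ₑ ^ p
      ≤ max ((k : ℝ≥0∞) ^ (1 - p)) 1 *
        ∫⁻ θ in Set.Ioc 0 (2 * π), ‖f (circleMap 0 r θ)‖ₑ ^ p := by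
  set H : ℝ → ℝ≥0∞ := fun θ => ‖f (circleMap 0 r θ)‖ₑ ^ p
  have hH : Measurable H := ((hf.comp_continuous (continuous_circleMap 0 r)
    (circleMap_mem_sphere' 0 r)).enorm.measurable).pow_const p
  have hper : Periodic H (2 * π) := fun θ => by simp only [H, periodic_circleMap 0 r θ]
  have hshift : ∀ c, ∫⁻ θ in Set.Ioc 0 (2 * π), H (θ + c) = ∫⁻ θ in Set.Ioc 0 (2 * π), H θ := by
    simpa using hper.setLIntegral_Ioc_comp_add two_pi_pos 0
  have hk₀ : (k : ℝ≥0∞) ≠ 0 := by exact_mod_cast hk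
  set C := max ((k : ℝ≥0∞) ^ (1 - p)) 1
  calc ∫⁻ θ in Set.Ioc 0 (2 * π), ‖wiener k f (circleMap 0 r θ)‖ₑ ^ p
      ≤ ∫⁻ θ in Set.Ioc 0 (2 * π), C * (k : ℝ≥0∞)⁻¹ * ∑ j ∈ range k, H (θ + 2 * π * j / k) :=
        lintegral_mono fun θ => enorm_wiener_circleMap_rpow_le hk hp f r θ
    _ = C * (k : ℝ≥0∞)⁻¹ * ∑ j ∈ range k, ∫⁻ θ in Set.Ioc 0 (2 * π), H (θ + 2 * π * j / k) := by
        rw [lintegral_const_mul _ (by fun_prop), lintegral_finsetSum _ fun j _ => by fun_prop]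
    _ = C * (k : ℝ≥0∞)⁻¹ * (k * ∫⁻ θ in Set.Ioc 0 (2 * π), H θ) := by
        simp_rw [hshift, sum_const, card_range, nsmul_eq_mul]
    _ = C * ∫⁻ θ in Set.Ioc 0 (2 * π), H θ := by
        rw [mul_assoc, ← mul_assoc _ (k : ℝ≥0∞),
          ENNReal.inv_mul_cancel hk₀ (ENNReal.natCast_ne_top k), one_mul]

theorem hpInt_wiener_le {k : ℕ} (hk : k ≠ 0) {p : ℝ} (hp : 0 < p) {f : ℂ → ℂ} {r : ℝ}
    (hf : ContinuousOn f (sphere 0 |r|)) :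
    hpInt p (wiener k f) r ≤ max ((k : ℝ≥0∞) ^ (1 - p)) 1 * hpInt p f r := by
  rw [hpInt_eq_lintegral_circleMap _ _ _ hp.le, hpInt_eq_lintegral_circleMap _ _ _ hp.le,
    ← mul_div_assoc]
  exact ENNReal.div_le_div_right (lintegral_enorm_wiener_circleMap_rpow_le hk hp hf) _

theorem hpNorm_le_of_hpInt_le {p : ℝ} (hp : 0 ≤ p) {f g : ℂ → ℂ} {C : ℝ≥0∞}
    (h : ∀ r ∈ Set.Ioo (0 : ℝ) 1, hpInt p g r ≤ C * hpInt p f r) :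
    hpNorm p g ≤ C ^ (1 / p) * hpNorm p f := by
  have hp' : 0 ≤ 1 / p := by positivity
  refine iSup₂_le fun r hr => ?_
  calc hpInt p g r ^ (1 / p)
      ≤ (C * hpInt p f r) ^ (1 / p) := ENNReal.rpow_le_rpow (h r hr) hp'
    _ = C ^ (1 / p) * hpInt p f r ^ (1 / p) := ENNReal.mul_rpow_of_nonneg _ _ hp'
    _ ≤ C ^ (1 / p) * hpNorm p f := by
        gcongr
        exact le_iSup₂ (f := fun r (_ : r ∈ Set.Ioo (0 : ℝ) 1) => hpInt p f r ^ (1 / p)) r hr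

theorem wiener_trick_norm_bound (k : ℕ) (hk : 2 ≤ k) (p : ℝ) (hp : 0 < p)
    (f : ℂ → ℂ) (hf : DifferentiableOn ℂ f (Metric.ball 0 1)) :
    (∀ r ∈ Set.Ioo (0 : ℝ) 1,
      hpInt p (wiener k f) r ≤ ENNReal.ofReal (max ((k : ℝ) ^ (1 - p)) 1) * hpInt p f r)
    ∧ hpNorm p (wiener k f) ≤ ENNReal.ofReal (max ((k : ℝ) ^ (1 / p - 1)) 1) * hpNorm p f := by
  have hk₀ : k ≠ 0 := by omega
  have hk_pos : (0 : ℝ) < k := by positivity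
  have hint : ∀ r ∈ Set.Ioo (0 : ℝ) 1,
      hpInt p (wiener k f) r ≤ max ((k : ℝ≥0∞) ^ (1 - p)) 1 * hpInt p f r := fun r hr =>
    hpInt_wiener_le hk₀ hp <| hf.continuousOn.mono <|
      sphere_subset_ball <| (abs_of_pos hr.1).trans_lt hr.2
  simp only [ENNReal.ofReal_max_rpow_one hk_pos, ENNReal.ofReal_natCast]
  refine ⟨hint, ?_⟩
  calc hpNorm p (wiener k f)
      ≤ max ((k : ℝ≥0∞) ^ (1 - p)) 1 ^ (1 / p) * hpNorm p f := hpNorm_le_of_hpInt_le hp.le hint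
    _ = max ((k : ℝ≥0∞) ^ (1 / p - 1)) 1 * hpNorm p f := by
        rw [ENNReal.max_rpow_one_rpow (by positivity)]
        congr 3
        field_simp
end

section
/- Let k ≥ 2 be an integer and let f be a bounded analytic function on the open unit disc D. Suppose that for almost every θ ∈ [0,2π] the radial limit lim_{r→1⁻} f(re^{iθ}) exists and has modulus 1, and likewise for almost every θ the radial limit lim_{r→1⁻} W_k f(re^{iθ}) exists and has modulus 1 (i.e., both f and W_k f are inner functions). Then f = W_k f on D. -/
open MeasureTheory
open scoped ENNReal

/-
Since `W_k f` is the mean of `f` over each orbit `{ω^j z}` of the rotation group and is constant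
on that orbit, Pythagoras on each orbit and rotation invariance of circle averages give
`avg_r |f - W_k f|² = avg_r |f|² - avg_r |W_k f|²` on every circle of radius `r < 1`. When `f` and
`W_k f` are inner, dominated convergence sends both averages on the right to `1` as `r → 1`,
so `avg_r |f - W_k f|² → 0`. The Poisson formula for `(f - W_k f)²` bounds `|f - W_k f|²` at any
point of the disc by a constant multiple of that average, hence `f = W_k f`.
-/

open Complex Filter Metric Set Topology Real

theorem sum_norm_sub_sq_of_sum_eq {E : Type*} [NormedAddCommGroup E] [InnerProductSpace ℝ E]
    {ι : Type*} (s : Finset ι) (v : ι → E) {m : E} (hm : ∑ i ∈ s, v i = s.card • m) :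
    ∑ i ∈ s, ‖v i - m‖ ^ 2 = ∑ i ∈ s, ‖v i‖ ^ 2 - s.card * ‖m‖ ^ 2 := by
  have hinner : ∑ i ∈ s, inner ℝ (v i) m = s.card * ‖m‖ ^ 2 := by
    rw [← sum_inner, hm, inner_smul_left_eq_smul, real_inner_self_eq_norm_sq, nsmul_eq_mul]
  simp only [norm_sub_sq_real, Finset.sum_add_distrib, Finset.sum_sub_distrib,
    ← Finset.mul_sum, hinner, Finset.sum_const, nsmul_eq_mul]
  ring

theorem sum_range_pow_mul_pow_mul {M : Type*} [AddCommMonoid M] {ζ : ℂ} {k : ℕ} (hζ : ζ ^ k = 1)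
    (g : ℂ → M) (i : ℕ) (z : ℂ) :
    ∑ j ∈ Finset.range k, g (ζ ^ j * (ζ ^ i * z)) = ∑ j ∈ Finset.range k, g (ζ ^ j * z) := by
  induction i with
  | zero => simp
  | succ i ih =>
    rw [← ih]
    obtain _ | n := k
    · simp
    rw [Finset.sum_range_succ, Finset.sum_range_succ' _ n,
      show ζ ^ n * (ζ ^ (i + 1) * z) = ζ ^ (n + 1) * (ζ ^ i * z) by ring, hζ, pow_zero]
    exact congrArg₂ _ (Finset.sum_congr rfl fun j _ => by ring_nf) rfl

theorem circleAverage_comp_mul {E : Type*} [NormedAddCommGroup E] [NormedSpace ℝ E]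
    (G : ℂ → E) {c : ℂ} (hc : ‖c‖ = 1) (R : ℝ) :
    circleAverage (fun z => G (c * z)) 0 R = circleAverage G 0 R := by
  have hrot (θ : ℝ) : c * circleMap 0 R θ = circleMap 0 R (θ + arg c) := by
    conv_lhs => rw [← norm_mul_exp_arg_mul_I c, hc]
    simp only [circleMap_zero, ofReal_add, add_mul, Complex.exp_add, ofReal_one, one_mul]
    ring
  simp only [circleAverage_def, hrot, ← circleAverage_eq_integral_add]

theorem ContinuousOn.comp_mul_sphere {E : Type*} [TopologicalSpace E] {G : ℂ → E} {r : ℝ}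
    (hG : ContinuousOn G (sphere 0 r)) {c : ℂ} (hc : ‖c‖ = 1) :
    ContinuousOn (fun z => G (c * z)) (sphere 0 r) :=
  hG.comp (continuous_const_mul c).continuousOn fun z hz => by simpa [norm_mul, hc] using hz

theorem circleAverage_sum_comp_pow_mul {E : Type*} [NormedAddCommGroup E] [NormedSpace ℝ E]
    {G : ℂ → E} {R : ℝ} (hG : ContinuousOn G (sphere 0 |R|)) {ζ : ℂ} (hζ : ‖ζ‖ = 1) (k : ℕ) :
    circleAverage (fun z => ∑ j ∈ Finset.range k, G (ζ ^ j * z)) 0 R =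
      k • circleAverage G 0 R := by
  have hζj (j : ℕ) : ‖ζ ^ j‖ = 1 := by simp [hζ]
  rw [circleAverage_fun_sum (f := fun j z => G (ζ ^ j * z)) fun j _ =>
    (hG.comp_mul_sphere (hζj j)).circleIntegrable']
  simp [circleAverage_comp_mul G (hζj _)]

theorem norm_exp_two_pi_I_div (k : ℕ) : ‖exp (2 * π * I / k)‖ = 1 := by
  rw [show 2 * π * I / k = ((2 * π / k : ℝ) : ℂ) * I by push_cast; ring,
    norm_exp_ofReal_mul_I]

theorem exp_two_pi_I_div_pow_self (k : ℕ) : exp (2 * π * I / k) ^ k = 1 := by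
  obtain rfl | hk := eq_or_ne k 0
  · simp
  · exact (isPrimitiveRoot_exp k hk).pow_eq_one

theorem wiener_eq_sum_pow (k : ℕ) (f : ℂ → ℂ) (z : ℂ) :
    wiener k f z = (k : ℂ)⁻¹ * ∑ j ∈ Finset.range k, f (exp (2 * π * I / k) ^ j * z) := by
  refine congrArg _ (Finset.sum_congr rfl fun j _ => ?_)
  rw [← Complex.exp_nat_mul]
  ring_nf

theorem sum_range_eq_card_nsmul_wiener {k : ℕ} (hk : k ≠ 0) (f : ℂ → ℂ) (z : ℂ) :
    ∑ j ∈ Finset.range k, f (exp (2 * π * I / k) ^ j * z) =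
      (Finset.range k).card • wiener k f z := by
  rw [wiener_eq_sum_pow, Finset.card_range, nsmul_eq_mul, mul_inv_cancel_left₀ (by simpa)]

theorem wiener_pow_mul (k : ℕ) (f : ℂ → ℂ) (i : ℕ) (z : ℂ) :
    wiener k f (exp (2 * π * I / k) ^ i * z) = wiener k f z := by
  rw [wiener_eq_sum_pow, wiener_eq_sum_pow,
    sum_range_pow_mul_pow_mul (exp_two_pi_I_div_pow_self k)]

theorem differentiableOn_wiener (k : ℕ) {f : ℂ → ℂ} {R : ℝ}
    (hf : DifferentiableOn ℂ f (ball 0 R)) : DifferentiableOn ℂ (wiener k f) (ball 0 R) := by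
  rw [show wiener k f = _ from funext (wiener_eq_sum_pow k f)]
  refine DifferentiableOn.const_mul (DifferentiableOn.fun_sum fun j _ => ?_) _
  refine hf.comp (differentiableOn_id.const_mul _) fun z hz => ?_
  simpa [norm_mul, norm_pow, norm_exp_two_pi_I_div] using hz

theorem norm_wiener_le (k : ℕ) {f : ℂ → ℂ} {R M : ℝ} (hM : ∀ z ∈ ball (0 : ℂ) R, ‖f z‖ ≤ M) :
    ∀ z ∈ ball (0 : ℂ) R, ‖wiener k f z‖ ≤ M := by
  intro z hz
  have hsum : ‖∑ j ∈ Finset.range k, f (exp (2 * π * I / k) ^ j * z)‖ ≤ k * M := by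
    refine (norm_sum_le _ _).trans ?_
    have hmem (j : ℕ) : exp (2 * π * I / k) ^ j * z ∈ ball (0 : ℂ) R := by
      simpa [norm_mul, norm_pow, norm_exp_two_pi_I_div] using hz
    simpa using Finset.sum_le_card_nsmul (Finset.range k)
      (fun j => ‖f (exp (2 * π * I / k) ^ j * z)‖) M fun j _ => hM _ (hmem j)
  rw [wiener_eq_sum_pow, norm_mul, norm_inv, Complex.norm_natCast]
  obtain rfl | hk := eq_or_ne k 0
  · simpa using (norm_nonneg _).trans (hM z hz)
  · calc _ ≤ (k : ℝ)⁻¹ * (k * M) := by gcongr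
      _ = M := inv_mul_cancel_left₀ (by simpa) M

theorem sum_norm_sub_wiener_sq {k : ℕ} (hk : k ≠ 0) (f : ℂ → ℂ) (z : ℂ) :
    ∑ j ∈ Finset.range k, ‖f (exp (2 * π * I / k) ^ j * z) -
        wiener k f (exp (2 * π * I / k) ^ j * z)‖ ^ 2 =
      ∑ j ∈ Finset.range k, ‖f (exp (2 * π * I / k) ^ j * z)‖ ^ 2 - k * ‖wiener k f z‖ ^ 2 := by
  simp only [wiener_pow_mul]
  simpa using sum_norm_sub_sq_of_sum_eq _ _ (sum_range_eq_card_nsmul_wiener hk f z)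

theorem circleAverage_norm_sub_wiener_sq {k : ℕ} (hk : k ≠ 0) {f : ℂ → ℂ} {R : ℝ}
    (hf : ContinuousOn f (sphere 0 |R|)) (hW : ContinuousOn (wiener k f) (sphere 0 |R|)) :
    circleAverage (fun z => ‖f z - wiener k f z‖ ^ 2) 0 R =
      circleAverage (fun z => ‖f z‖ ^ 2) 0 R - circleAverage (fun z => ‖wiener k f z‖ ^ 2) 0 R := by
  have hζ := norm_exp_two_pi_I_div k
  have hf2 : ContinuousOn (fun z => ‖f z‖ ^ 2) (sphere 0 |R|) := by fun_prop
  have hsum := circleAverage_sum_comp_pow_mul hf2 hζ k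
  have hsum_cont : ContinuousOn
      (fun z => ∑ j ∈ Finset.range k, ‖f (exp (2 * π * I / k) ^ j * z)‖ ^ 2) (sphere 0 |R|) :=
    continuousOn_finsetSum _ fun j _ => hf2.comp_mul_sphere (by simp [hζ])
  refine mul_left_cancel₀ (Nat.cast_ne_zero.2 hk : (k : ℝ) ≠ 0) ?_
  rw [← nsmul_eq_mul, ← circleAverage_sum_comp_pow_mul (by fun_prop) hζ k]
  simp only [sum_norm_sub_wiener_sq hk]
  rw [circleAverage_fun_sub hsum_cont.circleIntegrable' (by fun_prop), hsum,
    show (fun z => (k : ℝ) * ‖wiener k f z‖ ^ 2) = (k : ℝ) • fun z => ‖wiener k f z‖ ^ 2 from rfl,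
    circleAverage_smul, nsmul_eq_mul, smul_eq_mul, mul_sub]

theorem norm_circleAverage_le {E : Type*} [NormedAddCommGroup E] [NormedSpace ℝ E]
    (f : ℂ → E) (c : ℂ) (R : ℝ) :
    ‖circleAverage f c R‖ ≤ circleAverage (fun z => ‖f z‖) c R := by
  rw [circleAverage_def, circleAverage_def, norm_smul, Real.norm_of_nonneg (by positivity),
    smul_eq_mul]
  gcongr
  exact intervalIntegral.norm_integral_le_integral_norm (by positivity)

theorem norm_le_mul_circleAverage_norm {E : Type*} [NormedAddCommGroup E] [NormedSpace ℂ E]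
    [CompleteSpace E] {F : ℂ → E} {c w : ℂ} {R : ℝ} (hF : DiffContOnCl ℂ F (ball c R))
    (hw : w ∈ ball c R) :
    ‖F w‖ ≤ (R + ‖w - c‖) / (R - ‖w - c‖) * circleAverage (fun z => ‖F z‖) c R := by
  have hR : 0 < R := pos_of_mem_ball hw
  have hwR : ‖w - c‖ < R := mem_ball_iff_norm.1 hw
  have hP : ContinuousOn (poissonKernel c w) (sphere c |R|) := by
    rw [poissonKernel_eq_re_herglotzRieszKernel]
    exact continuous_re.comp_continuousOn (continuousOn_herglotzRieszKernel_sphere hw)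
  have hFc : ContinuousOn F (sphere c |R|) := hF.continuousOn.mono <| by
    rw [abs_of_pos hR, closure_ball c hR.ne']
    exact sphere_subset_closedBall
  have hPF (z : ℂ) (hz : z ∈ sphere c |R|) :
      ‖(poissonKernel c w • F) z‖ ≤ (R + ‖w - c‖) / (R - ‖w - c‖) * ‖F z‖ := by
    rw [abs_of_pos hR] at hz
    have hP0 : 0 ≤ poissonKernel c w z := by
      rw [poissonKernel_def, mem_sphere_iff_norm.1 hz]
      exact div_nonneg (by nlinarith [norm_nonneg (w - c)]) (sq_nonneg _)
    have hPle : poissonKernel c w z ≤ (R + ‖w - c‖) / (R - ‖w - c‖) := by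
      rw [poissonKernel_eq_re_herglotzRieszKernel]
      exact re_herglotzRieszKernel_le hz hw
    rw [Pi.smul_apply', norm_smul, Real.norm_of_nonneg hP0]
    gcongr
  rw [← hF.circleAverage_poissonKernel_smul hw, ← smul_eq_mul, ← circleAverage_fun_smul]
  refine (norm_circleAverage_le _ c R).trans (circleAverage_mono ?_ ?_ hPF)
  · exact (hP.smul hFc).norm.circleIntegrable'
  · exact (hFc.norm.const_smul ((R + ‖w - c‖) / (R - ‖w - c‖))).circleIntegrable'

theorem eqOn_zero_of_tendsto_circleAverage_norm_sq {h : ℂ → ℂ} {c : ℂ} {R : ℝ}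
    (hh : DifferentiableOn ℂ h (ball c R))
    (hlim : Tendsto (fun r => circleAverage (fun z => ‖h z‖ ^ 2) c r) (𝓝[<] R) (𝓝 0)) :
    EqOn h 0 (ball c R) := by
  intro w hw
  have hwR : ‖w - c‖ < R := mem_ball_iff_norm.1 hw
  -- The Poisson bound is applied to `h ^ 2`, whose norm is `‖h‖ ^ 2`.
  have hbound : ∀ᶠ r in 𝓝[<] R, ‖h w‖ ^ 2 ≤
      (r + ‖w - c‖) / (r - ‖w - c‖) * circleAverage (fun z => ‖h z‖ ^ 2) c r := by
    filter_upwards [Ioo_mem_nhdsLT hwR] with r hr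
    simpa [norm_pow] using norm_le_mul_circleAverage_norm
      ((hh.pow 2).diffContOnCl_ball (closedBall_subset_ball hr.2)) (mem_ball_iff_norm.2 hr.1)
  have hfactor : Tendsto (fun r => (r + ‖w - c‖) / (r - ‖w - c‖)) (𝓝[<] R)
      (𝓝 ((R + ‖w - c‖) / (R - ‖w - c‖))) := by
    refine tendsto_nhdsWithin_of_tendsto_nhds (ContinuousAt.tendsto ?_)
    exact (continuousAt_id.add continuousAt_const).div (continuousAt_id.sub continuousAt_const)
      (sub_ne_zero.2 hwR.ne')
  have hsq : ‖h w‖ ^ 2 ≤ 0 := ge_of_tendsto (by simpa using hfactor.mul hlim) hbound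
  simpa using hsq

theorem tendsto_circleAverage_norm_sq_of_radial_limit {E : Type*} [NormedAddCommGroup E]
    {F : ℂ → E} (hF : ContinuousOn F (ball 0 1)) {M : ℝ} (hM : ∀ z ∈ ball (0 : ℂ) 1, ‖F z‖ ≤ M)
    (hlim : ∀ᵐ θ : ℝ ∂(volume.restrict (Icc 0 (2 * π))), ∃ L : E,
      Tendsto (fun r : ℝ => F (r * exp (θ * I))) (𝓝[<] 1) (𝓝 L) ∧ ‖L‖ = 1) :
    Tendsto (fun r => circleAverage (fun z => ‖F z‖ ^ 2) 0 r) (𝓝[<] 1) (𝓝 1) := by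
  have hmem {r : ℝ} (hr : r ∈ Ioo 0 1) (θ : ℝ) : circleMap 0 r θ ∈ ball (0 : ℂ) 1 := by
    simpa [abs_of_pos hr.1] using hr.2
  have hint : Tendsto (fun r => ∫ θ in 0..2 * π, ‖F (circleMap 0 r θ)‖ ^ 2) (𝓝[<] 1)
      (𝓝 (∫ _ in 0..2 * π, (1 : ℝ))) := by
    refine intervalIntegral.tendsto_integral_filter_of_dominated_convergence (fun _ => M ^ 2)
      ?_ ?_ intervalIntegrable_const ?_
    · filter_upwards [Ioo_mem_nhdsLT zero_lt_one] with r hr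
      exact ((hF.comp_continuous (continuous_circleMap 0 r) (hmem hr)).norm.pow 2)
        |>.aestronglyMeasurable
    · filter_upwards [Ioo_mem_nhdsLT zero_lt_one] with r hr
      refine ae_of_all _ fun θ _ => ?_
      rw [norm_pow, norm_norm]
      exact pow_le_pow_left₀ (norm_nonneg _) (hM _ (hmem hr θ)) 2
    · rw [ae_restrict_iff' measurableSet_Icc] at hlim
      filter_upwards [hlim] with θ hθ hθ_mem
      rw [uIoc_of_le two_pi_pos.le] at hθ_mem
      obtain ⟨L, hL, hL_norm⟩ := hθ (Ioc_subset_Icc_self hθ_mem)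
      simpa [circleMap_zero, hL_norm] using hL.norm.pow 2
  have hmean := hint.const_mul (2 * π)⁻¹
  rwa [intervalIntegral.integral_const, smul_eq_mul, sub_zero, mul_one,
    inv_mul_cancel₀ two_pi_pos.ne'] at hmean

theorem wiener_inner_implies_eq (k : ℕ) (hk : 2 ≤ k) (f : ℂ → ℂ)
    (hf : DifferentiableOn ℂ f (Metric.ball 0 1))
    (hb : ∃ M : ℝ, ∀ z ∈ Metric.ball (0 : ℂ) 1, ‖f z‖ ≤ M)
    (hinner : ∀ᵐ (θ : ℝ) ∂(volume.restrict (Set.Icc (0 : ℝ) (2 * Real.pi))),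
      ∃ L : ℂ, Filter.Tendsto (fun r : ℝ => f ((r : ℂ) * Complex.exp ((θ : ℂ) * Complex.I)))
          (nhdsWithin 1 (Set.Iio 1)) (nhds L) ∧ ‖L‖ = 1)
    (hinnerW : ∀ᵐ (θ : ℝ) ∂(volume.restrict (Set.Icc (0 : ℝ) (2 * Real.pi))),
      ∃ L : ℂ, Filter.Tendsto
          (fun r : ℝ => wiener k f ((r : ℂ) * Complex.exp ((θ : ℂ) * Complex.I)))
          (nhdsWithin 1 (Set.Iio 1)) (nhds L) ∧ ‖L‖ = 1) :
    ∀ z ∈ Metric.ball (0 : ℂ) 1, f z = wiener k f z := by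
  obtain ⟨M, hM⟩ := hb
  have hW := differentiableOn_wiener k hf
  have hf_lim := tendsto_circleAverage_norm_sq_of_radial_limit hf.continuousOn hM hinner
  have hW_lim := tendsto_circleAverage_norm_sq_of_radial_limit hW.continuousOn
    (norm_wiener_le k hM) hinnerW
  have hdiff_lim : Tendsto (fun r => circleAverage (fun z => ‖f z - wiener k f z‖ ^ 2) 0 r)
      (𝓝[<] 1) (𝓝 0) := by
    refine (sub_self (1 : ℝ) ▸ hf_lim.sub hW_lim).congr' ?_
    filter_upwards [Ioo_mem_nhdsLT zero_lt_one] with r hr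
    have hsphere : sphere (0 : ℂ) |r| ⊆ ball 0 1 :=
      sphere_subset_ball (by simpa [abs_of_pos hr.1] using hr.2)
    exact (circleAverage_norm_sub_wiener_sq (by omega) (hf.continuousOn.mono hsphere)
      (hW.continuousOn.mono hsphere)).symm
  intro z hz
  exact sub_eq_zero.1 (eqOn_zero_of_tendsto_circleAverage_norm_sq (hf.sub hW) hdiff_lim hz)
end

section
/- Fix 1 ≤ p < ∞. The function t ↦ Φ₁(p,t) is decreasing on [0,1], with Φ₁(p,0) = 1 and Φ₁(p,1) = 0; in particular it takes all values in [0,1]. -/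
open MeasureTheory
open scoped ENNReal

/-!
Testing `f` against the kernels `r / z` and `r / z - z / r - B` on the circle `|z| = r`, the
Cauchy formulas give `r Re f'(0)` and `r Re f'(0) - B f(0)`; these kernels have modulus at most `1`
and `√(B² + 4)` there, while for `p ≥ 1` the circle means of `|f|` are at most `‖f‖_{H^p}`.
Hence `Φ₁(p,t) ≤ 1`, with equality at `t = 0` (take `f(z) = z`), and letting `B → -∞` gives
`Φ₁(p,1) = 0` and `Φ₁(p,t) = O(√(1 - t))`. As `x ↦ |x|^p` is convex, the unit ball of `H^p` is
convex, so `Φ₁(p,·)` is concave on `[0,1]`; being maximal at `0` it decreases, and concavity with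
the two endpoint estimates makes it continuous, so it takes every value in `[0,1]`.
-/

open Metric Set Real Complex Filter Topology
open scoped Pointwise

theorem ConcaveOn.antitoneOn_of_le_left {f : ℝ → ℝ} {a b : ℝ} (hf : ConcaveOn ℝ (Icc a b) f)
    (h : ∀ x ∈ Icc a b, f x ≤ f a) : AntitoneOn f (Icc a b) := by
  intro s hs t ht hst
  have hseg : s ∈ segment ℝ a t := by rw [segment_eq_Icc (hs.1.trans hst)]; exact ⟨hs.1, hst⟩
  simpa [min_eq_right (h t ht)] using
    hf.ge_on_segment (left_mem_Icc.2 (hs.1.trans hs.2)) ht hseg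

theorem continuousWithinAt_of_le_of_le {α : Type*} [TopologicalSpace α] {f g h : α → ℝ}
    {s : Set α} {x : α} (hg : ContinuousWithinAt g s x) (hh : ContinuousWithinAt h s x)
    (hgf : ∀ y ∈ s, g y ≤ f y) (hfh : ∀ y ∈ s, f y ≤ h y) (hgx : g x = f x) (hhx : h x = f x) :
    ContinuousWithinAt f s x :=
  tendsto_of_tendsto_of_tendsto_of_le_of_le' (hgx ▸ hg) (hhx ▸ hh)
    (eventually_nhdsWithin_of_forall hgf) (eventually_nhdsWithin_of_forall hfh)

theorem le_of_forall_mem_Ioo_mul_le {x C : ℝ} (h : ∀ r ∈ Ioo (0 : ℝ) 1, r * x ≤ C) : x ≤ C := by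
  have hlim : Tendsto (fun r : ℝ ↦ r * x) (𝓝[<] 1) (𝓝 x) := by
    simpa using ((continuous_mul_const x).tendsto 1).mono_left nhdsWithin_le_nhds
  exact le_of_tendsto hlim (eventually_of_mem (Ioo_mem_nhdsLT zero_lt_one) h)

section Hardy

variable {p r : ℝ} {f : ℂ → ℂ}

theorem continuousOn_rpow_norm (hp : 0 ≤ p) {s : Set ℂ} (hf : ContinuousOn f s) :
    ContinuousOn (fun z ↦ ‖f z‖ ^ p) s :=
  hf.norm.rpow_const fun _ _ ↦ Or.inr hp

theorem hpInt_eq_ofReal_circleAverage (hp : 0 ≤ p) (hr : 0 ≤ r)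
    (hf : ContinuousOn f (sphere 0 r)) :
    hpInt p f r = ENNReal.ofReal (circleAverage (fun z ↦ ‖f z‖ ^ p) 0 r) := by
  have hcont : Continuous fun θ : ℝ ↦ ‖f (circleMap 0 r θ)‖ ^ p :=
    (continuousOn_rpow_norm hp hf).comp_continuous (continuous_circleMap 0 r)
      (circleMap_mem_sphere 0 hr)
  rw [hpInt, circleAverage_def, smul_eq_mul, intervalIntegral.integral_of_le two_pi_pos.le,
    ← div_eq_inv_mul, ENNReal.ofReal_div_of_pos two_pi_pos,
    ofReal_integral_eq_lintegral_ofReal hcont.integrableOn_Ioc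
      (Eventually.of_forall fun _ ↦ by positivity)]
  simp only [circleMap_zero]

theorem hpNorm_le_one_iff (hp : 0 < p) (hf : ContinuousOn f (ball 0 1)) :
    hpNorm p f ≤ 1 ↔ ∀ r ∈ Ioo (0 : ℝ) 1, circleAverage (fun z ↦ ‖f z‖ ^ p) 0 r ≤ 1 := by
  refine iSup₂_le_iff.trans (forall₂_congr fun r hr ↦ ?_)
  rw [hpInt_eq_ofReal_circleAverage hp.le hr.1.le (hf.mono (sphere_subset_ball hr.2)),
    ← ENNReal.one_rpow (1 / p), ENNReal.rpow_le_rpow_iff (one_div_pos.2 hp),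
    ENNReal.ofReal_le_one]

theorem hpNorm_le_one_of_norm_le_one (hp : 0 < p) (hf : ContinuousOn f (ball 0 1))
    (hf₁ : ∀ z ∈ ball (0 : ℂ) 1, ‖f z‖ ≤ 1) : hpNorm p f ≤ 1 := by
  refine (hpNorm_le_one_iff hp hf).2 fun r hr ↦ ?_
  have hsphere : sphere (0 : ℂ) r ⊆ ball 0 1 := sphere_subset_ball hr.2
  refine circleAverage_mono_on_of_le_circle
    ((continuousOn_rpow_norm hp.le (hf.mono hsphere)).circleIntegrable hr.1.le) fun z hz ↦ ?_
  rw [abs_of_pos hr.1] at hz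
  exact rpow_le_one (norm_nonneg _) (hf₁ z (hsphere hz)) hp.le

theorem hpNorm_convexComb_le_one (hp : 1 ≤ p) {a b : ℝ} {g : ℂ → ℂ} (ha : 0 ≤ a) (hb : 0 ≤ b)
    (hab : a + b = 1) (hf : ContinuousOn f (ball 0 1)) (hg : ContinuousOn g (ball 0 1))
    (hf₁ : hpNorm p f ≤ 1) (hg₁ : hpNorm p g ≤ 1) :
    hpNorm p (fun z ↦ a * f z + b * g z) ≤ 1 := by
  have hp0 : 0 < p := one_pos.trans_le hp
  rw [hpNorm_le_one_iff hp0 hf] at hf₁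
  rw [hpNorm_le_one_iff hp0 hg] at hg₁
  rw [hpNorm_le_one_iff hp0 (by fun_prop)]
  intro r hr
  have hfr := hf.mono (sphere_subset_ball hr.2)
  have hgr := hg.mono (sphere_subset_ball hr.2)
  have hfa : CircleIntegrable (fun z ↦ a • ‖f z‖ ^ p) 0 r :=
    (continuousOn_const.fun_smul (continuousOn_rpow_norm hp0.le hfr)).circleIntegrable hr.1.le
  have hgb : CircleIntegrable (fun z ↦ b • ‖g z‖ ^ p) 0 r :=
    (continuousOn_const.fun_smul (continuousOn_rpow_norm hp0.le hgr)).circleIntegrable hr.1.le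
  have hpointwise : ∀ z, ‖(a : ℂ) * f z + b * g z‖ ^ p ≤ a • ‖f z‖ ^ p + b • ‖g z‖ ^ p := by
    intro z
    calc ‖(a : ℂ) * f z + b * g z‖ ^ p ≤ (a • ‖f z‖ + b • ‖g z‖) ^ p := by
          gcongr
          refine (norm_add_le _ _).trans_eq ?_
          simp [abs_of_nonneg ha, abs_of_nonneg hb]
      _ ≤ a • ‖f z‖ ^ p + b • ‖g z‖ ^ p :=
          (convexOn_rpow hp).2 (norm_nonneg (f z)) (norm_nonneg (g z)) ha hb hab
  calc circleAverage (fun z ↦ ‖(a : ℂ) * f z + b * g z‖ ^ p) 0 r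
      ≤ circleAverage (fun z ↦ a • ‖f z‖ ^ p + b • ‖g z‖ ^ p) 0 r :=
        circleAverage_mono
          ((continuousOn_rpow_norm hp0.le (by fun_prop)).circleIntegrable hr.1.le)
          (hfa.add hgb) fun z _ ↦ hpointwise z
    _ = a * circleAverage (fun z ↦ ‖f z‖ ^ p) 0 r
          + b * circleAverage (fun z ↦ ‖g z‖ ^ p) 0 r := by
        rw [circleAverage_fun_add hfa hgb, circleAverage_fun_smul,
          circleAverage_fun_smul, smul_eq_mul, smul_eq_mul]
    _ ≤ 1 := by nlinarith [hf₁ r hr, hg₁ r hr]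

theorem circleAverage_norm_le_one (hp : 1 ≤ p) (hr : 0 ≤ r) (hf : ContinuousOn f (sphere 0 r))
    (hf₁ : circleAverage (fun z ↦ ‖f z‖ ^ p) 0 r ≤ 1) :
    circleAverage (fun z ↦ ‖f z‖) 0 r ≤ 1 := by
  have hp0 : 0 < p := one_pos.trans_le hp
  -- Bernoulli's inequality `1 + p (x - 1) ≤ x ^ p`, averaged over the circle.
  have hbernoulli : ∀ x : ℝ, 0 ≤ x → p * x ≤ (p - 1) + x ^ p := fun x hx ↦ by
    have := one_add_mul_self_le_rpow_one_add (s := x - 1) (by linarith) hp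
    rw [add_sub_cancel] at this
    linarith
  have hmono : circleAverage (fun z ↦ p • ‖f z‖) 0 r
      ≤ circleAverage (fun z ↦ (p - 1) + ‖f z‖ ^ p) 0 r :=
    circleAverage_mono ((continuousOn_const.fun_smul hf.norm).circleIntegrable hr)
      ((continuousOn_const.add (continuousOn_rpow_norm hp0.le hf)).circleIntegrable hr)
      fun z _ ↦ hbernoulli _ (norm_nonneg _)
  rw [circleAverage_fun_smul, circleAverage_fun_add (circleIntegrable_const _ _ _)
    ((continuousOn_rpow_norm hp0.le hf).circleIntegrable hr), circleAverage_const,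
    smul_eq_mul] at hmono
  nlinarith

end Hardy

section Cauchy

variable {r : ℝ} {f : ℂ → ℂ}

theorem circleAverage_eq_apply_zero (hr : 0 ≤ r) (hf : DifferentiableOn ℂ f (closedBall 0 r)) :
    circleAverage f 0 r = f 0 := by
  rw [← abs_of_nonneg hr] at hf
  exact (hf.mono closure_ball_subset_closedBall).diffContOnCl.circleAverage

theorem circleAverage_inv_mul_eq_deriv (hr : 0 < r) (hf : DifferentiableOn ℂ f (closedBall 0 r)) :
    circleAverage (fun z ↦ z⁻¹ * f z) 0 r = deriv f 0 := by
  have hcauchy := hf.deriv_eq_smul_circleIntegral hr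
  rw [circleAverage_eq_circleIntegral hr.ne']
  simp only [sub_zero, smul_eq_mul] at hcauchy ⊢
  have hfun : (fun z ↦ z⁻¹ * (z⁻¹ * f z)) = fun z ↦ 1 / z ^ 2 * f z := by
    funext z; ring
  rw [hfun, hcauchy, ← mul_assoc, inv_mul_cancel₀ two_pi_I_ne_zero, one_mul]

theorem circleAverage_laurent_mul (hr : 0 < r) (hf : DifferentiableOn ℂ f (closedBall 0 r))
    (a b c : ℂ) :
    circleAverage (fun z ↦ (a * z⁻¹ + b * z + c) * f z) 0 r = a * deriv f 0 + c * f 0 := by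
  have hc : ContinuousOn f (sphere 0 r) := hf.continuousOn.mono sphere_subset_closedBall
  have hinv : ContinuousOn (fun z : ℂ ↦ z⁻¹) (sphere 0 r) :=
    continuousOn_inv₀.mono fun _ hz ↦ ne_of_mem_sphere hz hr.ne'
  have i₁ : CircleIntegrable (fun z ↦ a • (z⁻¹ * f z)) 0 r :=
    (continuousOn_const.fun_smul (hinv.fun_mul hc)).circleIntegrable hr.le
  have i₂ : CircleIntegrable (fun z ↦ b • (z * f z)) 0 r :=
    (continuousOn_const.fun_smul (continuousOn_id.fun_mul hc)).circleIntegrable hr.le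
  have i₁₂ : CircleIntegrable (fun z ↦ a • (z⁻¹ * f z) + b • (z * f z)) 0 r := i₁.add i₂
  have i₃ : CircleIntegrable (fun z ↦ c • f z) 0 r :=
    (continuousOn_const.fun_smul hc).circleIntegrable hr.le
  have hfun : (fun z ↦ (a * z⁻¹ + b * z + c) * f z)
      = fun z ↦ a • (z⁻¹ * f z) + b • (z * f z) + c • f z := by
    funext z; simp only [smul_eq_mul]; ring
  have hzf : circleAverage (fun z ↦ z * f z) 0 r = 0 := by
    rw [circleAverage_eq_apply_zero hr.le (by fun_prop), zero_mul]
  rw [hfun, circleAverage_fun_add i₁₂ i₃, circleAverage_fun_add i₁ i₂, circleAverage_fun_smul,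
    circleAverage_fun_smul, circleAverage_fun_smul, circleAverage_inv_mul_eq_deriv hr hf, hzf,
    circleAverage_eq_apply_zero hr.le hf]
  simp only [smul_eq_mul, mul_zero, add_zero]

theorem re_circleAverage_mul_le {g : ℂ → ℂ} {M : ℝ} (hr : 0 ≤ r)
    (hg : ContinuousOn g (sphere 0 r)) (hf : ContinuousOn f (sphere 0 r))
    (hgM : ∀ z ∈ sphere (0 : ℂ) r, ‖g z‖ ≤ M) (hf₁ : circleAverage (fun z ↦ ‖f z‖) 0 r ≤ 1) :
    (circleAverage (fun z ↦ g z * f z) 0 r).re ≤ M := by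
  have hM : 0 ≤ M := (norm_nonneg _).trans (hgM _ (circleMap_mem_sphere 0 hr 0))
  have hgf : ContinuousOn (fun z ↦ g z * f z) (sphere 0 r) := hg.mul hf
  calc (circleAverage (fun z ↦ g z * f z) 0 r).re
      = circleAverage (fun z ↦ (g z * f z).re) 0 r :=
        (reCLM.circleAverage_comp_comm (hgf.circleIntegrable hr)).symm
    _ ≤ circleAverage (fun z ↦ M * ‖f z‖) 0 r := by
        refine circleAverage_mono ((continuous_re.comp_continuousOn hgf).circleIntegrable hr)
          ((continuousOn_const.mul hf.norm).circleIntegrable hr) fun z hz ↦ ?_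
        rw [abs_of_nonneg hr] at hz
        calc (g z * f z).re ≤ ‖g z‖ * ‖f z‖ := (re_le_norm _).trans (norm_mul _ _).le
          _ ≤ M * ‖f z‖ := by gcongr; exact hgM z hz
    _ = M * circleAverage (fun z ↦ ‖f z‖) 0 r := circleAverage_fun_smul (a := M) (f := (‖f ·‖))
    _ ≤ M := mul_le_of_le_one_right hM hf₁

end Cauchy

theorem norm_mul_inv_sub_inv_mul_sub_le_sqrt {r : ℝ} (hr : 0 < r) {z : ℂ} (hz : z ∈ sphere (0 : ℂ) r) (B : ℝ) :
    ‖(r : ℂ) * z⁻¹ - (r : ℂ)⁻¹ * z - B‖ ≤ √(B ^ 2 + 4) := by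
  have hnorm : ‖z‖ = r := by simpa using hz
  have hsq : normSq z = r ^ 2 := by rw [normSq_eq_norm_sq, hnorm]
  -- on the circle `r z⁻¹ = conj z / r`, so the first two terms add up to `-2 i Im z / r`
  have hre : ((r : ℂ) * z⁻¹ - (r : ℂ)⁻¹ * z - B).re = -B := by
    simp only [sub_re, mul_re, ofReal_re, inv_re, hsq, ofReal_im, inv_im, zero_mul, sub_zero,
      normSq_ofReal, div_self_mul_self', neg_zero, zero_div, sub_eq_neg_self]
    field_simp
    ring
  have him : ((r : ℂ) * z⁻¹ - (r : ℂ)⁻¹ * z - B).im = -2 * z.im / r := by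
    simp only [sub_im, mul_im, ofReal_re, inv_im, hsq, ofReal_im, inv_re, zero_mul, add_zero,
      normSq_ofReal, div_self_mul_self', neg_zero, zero_div, sub_zero, neg_mul]
    field_simp
    ring
  obtain ⟨him_ge, him_le⟩ := abs_le.1 (hnorm ▸ abs_im_le_norm z)
  have him_sq : (-2 * z.im / r) ^ 2 ≤ 4 := by
    rw [div_pow, div_le_iff₀ (by positivity)]
    nlinarith
  rw [norm_eq_sqrt_sq_add_sq, hre, him, neg_sq]
  exact Real.sqrt_le_sqrt (by linarith)

section UnitBall

variable {p : ℝ} {f : ℂ → ℂ}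

theorem re_laurent_le_of_hpNorm_le_one (hp : 1 ≤ p) (hf : DifferentiableOn ℂ f (ball 0 1))
    (hnorm : hpNorm p f ≤ 1) {r : ℝ} (hr : r ∈ Ioo (0 : ℝ) 1) (a b c : ℂ) {M : ℝ}
    (hM : ∀ z ∈ sphere (0 : ℂ) r, ‖a * z⁻¹ + b * z + c‖ ≤ M) :
    (a * deriv f 0 + c * f 0).re ≤ M := by
  have hfr : DifferentiableOn ℂ f (closedBall 0 r) := hf.mono (closedBall_subset_ball hr.2)
  have hfs : ContinuousOn f (sphere 0 r) := hfr.continuousOn.mono sphere_subset_closedBall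
  have hkernel : ContinuousOn (fun z ↦ a * z⁻¹ + b * z + c) (sphere 0 r) := by
    fun_prop (disch := exact fun z hz ↦ ne_of_mem_sphere hz hr.1.ne')
  have hmean : circleAverage (fun z ↦ ‖f z‖) 0 r ≤ 1 := circleAverage_norm_le_one hp hr.1.le hfs <|
    (hpNorm_le_one_iff (one_pos.trans_le hp) hf.continuousOn).1 hnorm r hr
  rw [← circleAverage_laurent_mul hr.1 hfr]
  exact re_circleAverage_mul_le hr.1.le hkernel hfs hM hmean

theorem re_deriv_le_one (hp : 1 ≤ p) (hf : DifferentiableOn ℂ f (ball 0 1))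
    (hnorm : hpNorm p f ≤ 1) : (deriv f 0).re ≤ 1 :=
  le_of_forall_mem_Ioo_mul_le fun r hr ↦ by
    have h := re_laurent_le_of_hpNorm_le_one hp hf hnorm hr r 0 0 (M := 1) fun z hz ↦ by
      have hz' : ‖z‖ = r := by simpa using hz
      simp [hz', hr.1.ne', abs_of_pos hr.1]
    simpa using h

theorem re_deriv_le_sqrt_add (hp : 1 ≤ p) (hf : DifferentiableOn ℂ f (ball 0 1))
    (hnorm : hpNorm p f ≤ 1) (B : ℝ) : (deriv f 0).re ≤ √(B ^ 2 + 4) + B * (f 0).re :=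
  le_of_forall_mem_Ioo_mul_le fun r hr ↦ by
    have h := re_laurent_le_of_hpNorm_le_one hp hf hnorm hr r (-(r : ℂ)⁻¹) (-B) fun z hz ↦ by
      simpa only [neg_mul, ← sub_eq_add_neg] using norm_mul_inv_sub_inv_mul_sub_le_sqrt hr.1 hz B
    simp only [add_re, re_ofReal_mul, neg_mul, neg_re] at h
    linarith

end UnitBall

section Phi

variable {p t : ℝ}

def admissibleValues (p t : ℝ) : Set ℝ :=
  {x | ∃ f : ℂ → ℂ, DifferentiableOn ℂ f (ball 0 1) ∧ hpNorm p f ≤ 1 ∧ f 0 = t ∧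
    x = (deriv f 0).re}

theorem Phi_one_eq_sSup : Phi 1 p t = sSup (admissibleValues p t) := by
  simp only [Phi, admissibleValues, iteratedDeriv_one, Nat.factorial_one, Nat.cast_one, div_one]

theorem zero_mem_admissibleValues (hp : 0 < p) (ht : |t| ≤ 1) : 0 ∈ admissibleValues p t :=
  ⟨fun _ ↦ t, differentiableOn_const _,
    hpNorm_le_one_of_norm_le_one hp continuousOn_const fun _ _ ↦ by simpa using ht, rfl,
    by simp⟩

theorem one_mem_admissibleValues_zero (hp : 0 < p) : 1 ∈ admissibleValues p 0 :=
  ⟨id, differentiableOn_id, hpNorm_le_one_of_norm_le_one hp continuousOn_id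
    fun _ hz ↦ (mem_ball_zero_iff.1 hz).le, by simp, by simp⟩

theorem convexComb_mem_admissibleValues (hp : 1 ≤ p) {a b t₁ t₂ : ℝ} (ha : 0 ≤ a) (hb : 0 ≤ b)
    (hab : a + b = 1) :
    a • admissibleValues p t₁ + b • admissibleValues p t₂ ⊆
      admissibleValues p (a * t₁ + b * t₂) := by
  rintro _ ⟨_, ⟨_, ⟨f, hf, hfn, hf0, rfl⟩, rfl⟩, _, ⟨_, ⟨g, hg, hgn, hg0, rfl⟩, rfl⟩, rfl⟩
  have hf' : DifferentiableAt ℂ f 0 := hf.differentiableAt (ball_mem_nhds 0 one_pos)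
  have hg' : DifferentiableAt ℂ g 0 := hg.differentiableAt (ball_mem_nhds 0 one_pos)
  refine ⟨fun z ↦ a * f z + b * g z, by fun_prop,
    hpNorm_convexComb_le_one hp ha hb hab hf.continuousOn hg.continuousOn hfn hgn, ?_, ?_⟩
  · simp [hf0, hg0]
  · rw [deriv_fun_add (hf'.const_mul _) (hg'.const_mul _), deriv_const_mul _ hf',
      deriv_const_mul _ hg']
    simp

theorem bddAbove_admissibleValues (hp : 1 ≤ p) : BddAbove (admissibleValues p t) :=
  ⟨1, by rintro _ ⟨f, hf, hfn, -, rfl⟩; exact re_deriv_le_one hp hf hfn⟩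

theorem Phi_one_le_one (hp : 1 ≤ p) (t : ℝ) : Phi 1 p t ≤ 1 := by
  rw [Phi_one_eq_sSup]
  exact Real.sSup_le (by rintro _ ⟨f, hf, hfn, -, rfl⟩; exact re_deriv_le_one hp hf hfn) one_pos.le

theorem Phi_one_nonneg (hp : 1 ≤ p) (ht : |t| ≤ 1) : 0 ≤ Phi 1 p t := by
  rw [Phi_one_eq_sSup]
  exact le_csSup (bddAbove_admissibleValues hp) (zero_mem_admissibleValues (one_pos.trans_le hp) ht)

theorem Phi_one_zero (hp : 1 ≤ p) : Phi 1 p 0 = 1 := by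
  refine (Phi_one_le_one hp 0).antisymm ?_
  rw [Phi_one_eq_sSup]
  exact le_csSup (bddAbove_admissibleValues hp)
    (one_mem_admissibleValues_zero (one_pos.trans_le hp))

theorem Phi_one_le_sqrt_add (hp : 1 ≤ p) (ht : |t| ≤ 1) (B : ℝ) :
    Phi 1 p t ≤ √(B ^ 2 + 4) + B * t := by
  rw [Phi_one_eq_sSup]
  refine csSup_le ⟨0, zero_mem_admissibleValues (one_pos.trans_le hp) ht⟩ ?_
  rintro _ ⟨f, hf, hfn, hf0, rfl⟩
  simpa [hf0] using re_deriv_le_sqrt_add hp hf hfn B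

theorem concaveOn_Phi_one (hp : 1 ≤ p) : ConcaveOn ℝ (Icc 0 1) (Phi 1 p) := by
  refine ⟨convex_Icc 0 1, fun t₁ ht₁ t₂ ht₂ a b ha hb hab ↦ ?_⟩
  have hne : ∀ t ∈ Icc (0 : ℝ) 1, (admissibleValues p t).Nonempty := fun t ht ↦
    ⟨0, zero_mem_admissibleValues (one_pos.trans_le hp) ((abs_of_nonneg ht.1).trans_le ht.2)⟩
  simp only [Phi_one_eq_sSup, smul_eq_mul]
  rw [← smul_eq_mul, ← Real.sSup_smul_of_nonneg ha, ← smul_eq_mul, ← Real.sSup_smul_of_nonneg hb,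
    ← csSup_add ((hne t₁ ht₁).smul_set) ((bddAbove_admissibleValues hp).smul_of_nonneg ha)
      ((hne t₂ ht₂).smul_set) ((bddAbove_admissibleValues hp).smul_of_nonneg hb)]
  exact csSup_le_csSup (bddAbove_admissibleValues hp)
    (((hne t₁ ht₁).smul_set).add (hne t₂ ht₂).smul_set)
    (convexComb_mem_admissibleValues hp ha hb hab)

theorem Phi_one_le_mul_add (hp : 1 ≤ p) (ht : |t| ≤ 1) {s : ℝ} (hs : 0 < s) :
    Phi 1 p t ≤ s * (1 - t) + 2 / s := by
  have hsqrt : √((-s) ^ 2 + 4) ≤ s + 2 / s := by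
    have hs2 : s * (2 / s) = 2 := mul_div_cancel₀ 2 hs.ne'
    rw [Real.sqrt_le_left (by positivity)]
    nlinarith [sq_nonneg (2 / s)]
  linarith [Phi_one_le_sqrt_add hp ht (-s)]

theorem Phi_one_one (hp : 1 ≤ p) : Phi 1 p 1 = 0 := by
  refine le_antisymm (le_of_forall_pos_le_add fun ε hε ↦ ?_) (Phi_one_nonneg hp (by simp))
  have h := Phi_one_le_mul_add (t := 1) hp (by simp) (div_pos two_pos hε)
  rwa [sub_self, mul_zero, zero_add, div_div_cancel₀ two_ne_zero, ← zero_add ε] at h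

theorem Phi_one_le_three_mul_sqrt (hp : 1 ≤ p) (ht : t ∈ Icc (0 : ℝ) 1) :
    Phi 1 p t ≤ 3 * √(1 - t) := by
  rcases ht.2.eq_or_lt with rfl | ht1
  · simp [Phi_one_one hp]
  have hpos : 0 < √(1 - t) := Real.sqrt_pos.2 (by linarith)
  have h := Phi_one_le_mul_add hp ((abs_of_nonneg ht.1).trans_le ht.2) (inv_pos.2 hpos)
  have he : (√(1 - t))⁻¹ * (1 - t) + 2 / (√(1 - t))⁻¹ = 3 * √(1 - t) := by
    field_simp
    rw [Real.sq_sqrt (by linarith)]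
    ring
  rwa [he] at h

theorem one_sub_le_Phi_one (hp : 1 ≤ p) (ht : t ∈ Icc (0 : ℝ) 1) : 1 - t ≤ Phi 1 p t := by
  have h := (concaveOn_Phi_one hp).2 (left_mem_Icc.2 zero_le_one) (right_mem_Icc.2 zero_le_one)
    (sub_nonneg.2 ht.2) ht.1 (sub_add_cancel 1 t)
  simpa [Phi_one_zero hp, Phi_one_one hp] using h

theorem continuousOn_Phi_one (hp : 1 ≤ p) : ContinuousOn (Phi 1 p) (Icc 0 1) := by
  have hleft : ContinuousWithinAt (Phi 1 p) (Icc 0 1) 0 :=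
    continuousWithinAt_of_le_of_le (g := fun t ↦ 1 - t) (h := fun _ ↦ 1) (by fun_prop)
      continuousWithinAt_const (fun t ht ↦ one_sub_le_Phi_one hp ht)
      (fun t _ ↦ Phi_one_le_one hp t) (by simp [Phi_one_zero hp]) (Phi_one_zero hp).symm
  have hright : ContinuousWithinAt (Phi 1 p) (Icc 0 1) 1 :=
    continuousWithinAt_of_le_of_le (g := fun _ ↦ 0) (h := fun t ↦ 3 * √(1 - t))
      continuousWithinAt_const (by fun_prop)
      (fun t ht ↦ Phi_one_nonneg hp ((abs_of_nonneg ht.1).trans_le ht.2))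
      (fun t ht ↦ Phi_one_le_three_mul_sqrt hp ht) (Phi_one_one hp).symm
      (by simp [Phi_one_one hp])
  exact (concaveOn_Phi_one hp).continuousOn_Icc zero_lt_one
    ((continuousWithinAt_Icc_iff_Ici zero_lt_one).1 hleft)
    ((continuousWithinAt_Icc_iff_Iic zero_lt_one).1 hright)

end Phi

theorem phi_one_decreasing (p : ℝ) (hp : 1 ≤ p) :
    AntitoneOn (fun t => Phi 1 p t) (Set.Icc 0 1)
    ∧ Phi 1 p 0 = 1 ∧ Phi 1 p 1 = 0
    ∧ ∀ y ∈ Set.Icc (0 : ℝ) 1, ∃ t ∈ Set.Icc (0 : ℝ) 1, Phi 1 p t = y := by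
  refine ⟨(concaveOn_Phi_one hp).antitoneOn_of_le_left fun t _ ↦ ?_, Phi_one_zero hp,
    Phi_one_one hp, fun y hy ↦ ?_⟩
  · rw [Phi_one_zero hp]
    exact Phi_one_le_one hp t
  · have hivt := intermediate_value_Icc' zero_le_one (continuousOn_Phi_one hp)
    rw [Phi_one_zero hp, Phi_one_one hp] at hivt
    exact hivt hy
end

section
/- Fix 0 < p < 1 and set α₂ = √(p/(2−p)). Let α₁ be the unique solution in (0,1) of 1 + α² = 2α^p. Suppose α₁ < α < α₂ and α₂ < α̃ < 1 satisfy α(1+α²)^{−1/p} = α̃(1+α̃²)^{−1/p}. Then 1/α + α(2/p − 1) > 1/α̃ + α̃(2/p − 1). -/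
/-! Write `c = α₂² = p / (2 - p)` and `F y = log (y (1 + y²)^(-1/p))`. `F` increases on `(0, α₂]`,
and `y ↦ F (c / y) - F y` vanishes at `α₂` and has derivative
`2 (1 - p) (y² - c)² / (p y (y² + c²) (1 + y²)) > 0` beyond it, so `F α = F α̃ < F (c / α̃)` with
`c / α̃ < α₂`; hence `α α̃ < c`. As `2/p - 1 = 1/c`, the claim is `g α̃ < g α` for
`g y = 1/y + y/c`, and `g α - g α̃ = (α̃ - α)(1 - α α̃ / c) / (α α̃) > 0`. -/

open Real Set

noncomputable def logProfile (p y : ℝ) : ℝ := log y - p⁻¹ * log (1 + y ^ 2)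

lemma log_mul_rpow_eq_logProfile (p : ℝ) {y : ℝ} (hy : 0 < y) :
    log (y * (1 + y ^ 2) ^ (-(1 / p))) = logProfile p y := by
  have : 0 < 1 + y ^ 2 := by positivity
  rw [log_mul hy.ne' (rpow_pos_of_pos this _).ne', log_rpow this, logProfile]
  ring

lemma hasDerivAt_logProfile (p : ℝ) {x : ℝ} (hx : 0 < x) :
    HasDerivAt (logProfile p) (x⁻¹ - p⁻¹ * (2 * x / (1 + x ^ 2))) x := by
  have hsq : HasDerivAt (fun y : ℝ => 1 + y ^ 2) (2 * x) x := by
    simpa using (hasDerivAt_pow 2 x).const_add 1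
  exact (hasDerivAt_log hx.ne').sub ((hsq.log (by positivity)).const_mul p⁻¹)

section

variable {p : ℝ}

lemma strictMonoOn_logProfile (hp0 : 0 < p) (hp2 : p < 2) :
    StrictMonoOn (logProfile p) (Ioc 0 √(p / (2 - p))) := by
  refine strictMonoOn_of_deriv_pos (convex_Ioc _ _)
    (fun x hx => (hasDerivAt_logProfile p hx.1).continuousAt.continuousWithinAt) ?_
  intro x hx
  rw [interior_Ioc] at hx
  obtain ⟨hx0, hxs⟩ := hx
  rw [(hasDerivAt_logProfile p hx0).deriv]
  have hx2 : x ^ 2 * (2 - p) < p := by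
    rw [← lt_div_iff₀ (by linarith)]
    exact (lt_sqrt hx0.le).1 hxs
  rw [sub_pos]
  field_simp
  linarith

lemma hasDerivAt_logProfile_reflect_sub (hp0 : 0 < p) (hp2 : p < 2) {x : ℝ} (hx : 0 < x) :
    HasDerivAt (fun y => logProfile p (p / (2 - p) / y) - logProfile p y)
      (2 * (1 - p) * (x ^ 2 - p / (2 - p)) ^ 2 /
        (p * x * (x ^ 2 + (p / (2 - p)) ^ 2) * (1 + x ^ 2))) x := by
  set c := p / (2 - p) with hc
  have hc0 : 0 < c := div_pos hp0 (by linarith)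
  have hrefl : HasDerivAt (fun y => c / y) (-(c / x ^ 2)) x := by
    simpa [div_eq_mul_inv] using (hasDerivAt_inv hx.ne').const_mul c
  refine (((hasDerivAt_logProfile p (div_pos hc0 hx)).comp x hrefl).sub
    (hasDerivAt_logProfile p hx)).congr_deriv ?_
  have : 2 - p ≠ 0 := by linarith
  rw [hc]
  field_simp
  ring

lemma logProfile_lt_logProfile_reflect (hp0 : 0 < p) (hp1 : p < 1) {y : ℝ}
    (hy : √(p / (2 - p)) < y) :
    logProfile p y < logProfile p (p / (2 - p) / y) := by
  set s := √(p / (2 - p))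
  have hs0 : 0 < s := sqrt_pos.2 (div_pos hp0 (by linarith))
  have hmono :
      StrictMonoOn (fun y => logProfile p (p / (2 - p) / y) - logProfile p y) (Ici s) := by
    refine strictMonoOn_of_deriv_pos (convex_Ici s) (fun x hx => ?_) (fun x hx => ?_)
    · exact (hasDerivAt_logProfile_reflect_sub hp0 (by linarith)
        (hs0.trans_le hx)).continuousAt.continuousWithinAt
    · rw [interior_Ici] at hx
      have hx0 : 0 < x := hs0.trans hx
      rw [(hasDerivAt_logProfile_reflect_sub hp0 (by linarith) hx0).deriv]
      have : x ^ 2 - p / (2 - p) ≠ 0 := (sub_pos.2 ((sqrt_lt' hx0).1 hx)).ne'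
      have : 0 < 1 - p := by linarith
      positivity
  have := hmono self_mem_Ici hy.le hy
  have hss : p / (2 - p) / s = s := by
    rw [div_eq_iff hs0.ne', ← sq, sq_sqrt (div_pos hp0 (by linarith)).le]
  simp only [hss, sub_self] at this
  linarith

lemma mul_lt_of_logProfile_eq (hp0 : 0 < p) (hp1 : p < 1) {a b : ℝ} (ha : 0 < a)
    (has : a < √(p / (2 - p))) (hsb : √(p / (2 - p)) < b) (heq : logProfile p a = logProfile p b) :
    a * b < p / (2 - p) := by
  have hs0 : 0 < √(p / (2 - p)) := ha.trans has
  have hb0 : 0 < b := hs0.trans hsb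
  have hcb : p / (2 - p) / b < √(p / (2 - p)) := by
    rw [div_lt_iff₀ hb0]
    calc p / (2 - p) = √(p / (2 - p)) * √(p / (2 - p)) :=
          (mul_self_sqrt (div_pos hp0 (by linarith)).le).symm
      _ < √(p / (2 - p)) * b := mul_lt_mul_of_pos_left hsb hs0
  have hab : a < p / (2 - p) / b := by
    refine (strictMonoOn_logProfile hp0 (by linarith)).lt_iff_lt ⟨ha, has.le⟩
      ⟨div_pos (div_pos hp0 (by linarith)) hb0, hcb.le⟩ |>.1 ?_
    rw [heq]
    exact logProfile_lt_logProfile_reflect hp0 hp1 hsb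
  rwa [lt_div_iff₀ hb0] at hab

end

lemma inv_add_mul_lt_inv_add_mul {a b k : ℝ} (ha : 0 < a) (hab : a < b) (hk : a * b * k < 1) :
    1 / b + b * k < 1 / a + a * k := by
  have hb : 0 < b := ha.trans hab
  have : 1 / a + a * k - (1 / b + b * k) = (b - a) * (1 - a * b * k) / (a * b) := by
    field_simp
    ring
  have : 0 < (b - a) * (1 - a * b * k) / (a * b) := by
    exact div_pos (mul_pos (by linarith) (by linarith)) (by positivity)
  linarith

theorem small_root_is_bigger_general (p a a' : ℝ) (hp0 : 0 < p) (hp1 : p < 1)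
    (h2 : a < Real.sqrt (p / (2 - p)))
    (h3 : Real.sqrt (p / (2 - p)) < a')
    (heq : a * (1 + a ^ 2) ^ (-(1 / p)) = a' * (1 + a' ^ 2) ^ (-(1 / p))) :
    1 / a + a * (2 / p - 1) > 1 / a' + a' * (2 / p - 1) := by
  have ha' : 0 < a' := (sqrt_nonneg _).trans_lt h3
  have ha : 0 < a := by
    have : 0 < a * (1 + a ^ 2) ^ (-(1 / p)) := heq ▸ mul_pos ha' (by positivity)
    exact pos_of_mul_pos_left this (by positivity)
  have hprod : a * a' < p / (2 - p) := mul_lt_of_logProfile_eq hp0 hp1 ha h2 h3 <| by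
    rw [← log_mul_rpow_eq_logProfile p ha, ← log_mul_rpow_eq_logProfile p ha', heq]
  refine inv_add_mul_lt_inv_add_mul ha (h2.trans h3) ?_
  have : 2 / p - 1 = (p / (2 - p))⁻¹ := by field_simp
  rw [this, ← div_eq_mul_inv, div_lt_one (div_pos hp0 (by linarith))]
  exact hprod

theorem small_root_is_bigger (p a1 a a' : ℝ) (hp0 : 0 < p) (hp1 : p < 1)
    (ha1 : a1 ∈ Set.Ioo (0 : ℝ) 1) (ha1eq : 1 + a1 ^ 2 = 2 * a1 ^ p)
    (h1 : a1 < a) (h2 : a < Real.sqrt (p / (2 - p)))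
    (h3 : Real.sqrt (p / (2 - p)) < a') (h4 : a' < 1)
    (heq : a * (1 + a ^ 2) ^ (-(1 / p)) = a' * (1 + a' ^ 2) ^ (-(1 / p))) :
    1 / a + a * (2 / p - 1) > 1 / a' + a' * (2 / p - 1) :=
  small_root_is_bigger_general p a a' hp0 hp1 h2 h3 heq
end
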